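/- Let P = ERM^c with c ≥ m/N. For any v_{-I} ∈ ℝ≥0^{N−m}, let v̄_I ∈ ℝ≥0^m be any m values that are all greater than or equal to the maximal value in v_{-I}. Then δ_m^worst(v_{-I}) = δ_I(v̄_I, v_{-I}); that is, the supremum over v_I ∈ ℝ≥0^m of δ_I(v_I, v_{-I}) is attained by placing all m controlled samples at or above the maximum of the remaining samples, and its value does not depend on the particular choice of such v̄_I. -/

import Mathlib

open MeasureTheory ProbabilityTheory Filter

noncomputable section

noncomputable def sortedVal {N : ℕ} (v : Fin N → ℝ) (i : ℕ) : ℝ :=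
  (Multiset.sort (↑(List.ofFn v)) (· ≤ ·)).getD (N - i) 0

noncomputable def argmaxIdx (S : Finset ℕ) (f : ℕ → ℝ) : ℕ :=
  WithBot.unbotD 0 ((S.filter fun i => ∀ j ∈ S, f j ≤ f i).max)

noncomputable def ERMIdx (c : ℝ) {N : ℕ} (v : Fin N → ℝ) : ℕ :=
  argmaxIdx ((Finset.Icc 1 N).filter fun i => c * N < (i : ℝ))
    (fun i => (i : ℝ) * sortedVal v i)

noncomputable def ERM (c : ℝ) {N : ℕ} (v : Fin N → ℝ) : ℝ :=
  sortedVal v (ERMIdx c v)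

/-- Incentive-awareness measure `δ_I(v_I, v_{-I})` of a price function `P`,
where the coordinates in `I` are the manipulable ones and `v` records both
`v_I` (on `I`) and `v_{-I}` (off `I`). -/
noncomputable def deltaIdx {N : ℕ} (P : (Fin N → ℝ) → ℝ) (I : Finset (Fin N))
    (v : Fin N → ℝ) : ℝ :=
  1 - sInf {p : ℝ | ∃ b : Fin N → ℝ, (∀ j, 0 ≤ b j) ∧
      p = P fun j => if j ∈ I then b j else v j} / P v

/-- Worst-case incentive-awareness measure `δ_m^worst(v_{-I})`
(only the coordinates of `v` off `I` matter). -/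
noncomputable def deltaWorstIdx {N : ℕ} (P : (Fin N → ℝ) → ℝ) (I : Finset (Fin N))
    (v : Fin N → ℝ) : ℝ :=
  sSup {x : ℝ | ∃ u : Fin N → ℝ, (∀ j, 0 ≤ u j) ∧
      x = deltaIdx P I fun j => if j ∈ I then u j else v j}

/-- `Δ_{N,m}^worst` with explicit index set `I`:
expectation of `δ^worst(v_{-I})` over i.i.d. samples from `μ`. -/
noncomputable def DeltaWorstIdx {N : ℕ} (μ : Measure ℝ) (P : (Fin N → ℝ) → ℝ)
    (I : Finset (Fin N)) : ℝ :=
  ∫ v : Fin N → ℝ, deltaWorstIdx P I v ∂(Measure.pi fun _ => μ)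

/-- The index set `{0, …, m-1}` inside `Fin N`. -/
noncomputable def firstIdx (N m : ℕ) : Finset (Fin N) :=
  Finset.univ.filter fun j => (j : ℕ) < m

/-- The worst-case incentive-awareness measure `Δ_{N,m}^worst`. -/
noncomputable def DeltaWorst {N : ℕ} (μ : Measure ℝ) (P : (Fin N → ℝ) → ℝ) (m : ℕ) : ℝ :=
  DeltaWorstIdx μ P (firstIdx N m)

/-- Append-based incentive-awareness measure `δ_I(v_I, v_{-I})` for `P = ERM^c`. -/
noncomputable def deltaIA (c : ℝ) {m n : ℕ} (vI : Fin m → ℝ) (w : Fin n → ℝ) : ℝ :=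
  1 - sInf {p : ℝ | ∃ b : Fin m → ℝ, (∀ i, 0 ≤ b i) ∧ p = ERM c (Fin.append b w)} /
      ERM c (Fin.append vI w)

/-- Append-based worst-case incentive-awareness measure `δ_m^worst(v_{-I})` for `P = ERM^c`. -/
noncomputable def deltaWorstA (c : ℝ) (m : ℕ) {n : ℕ} (w : Fin n → ℝ) : ℝ :=
  sSup {x : ℝ | ∃ vI : Fin m → ℝ, (∀ i, 0 ≤ vI i) ∧ x = deltaIA c vI w}

/-- The index `k* = argmax_{i > cN} i·v_i` selected by `ERM^c` when the top `m`
of the `N` samples are fixed to `+∞` and the remaining `N - m` samples are `w`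
(so `v_i` for `i > m` is the `(i-m)`-th largest entry of `w`);
ties are broken towards the larger index. -/
noncomputable def kStarInf (c : ℝ) (N m : ℕ) {n : ℕ} (w : Fin n → ℝ) : ℕ :=
  argmaxIdx ((Finset.Icc (m + 1) N).filter fun i => c * N < (i : ℝ))
    (fun i => (i : ℝ) * sortedVal w (i - m))

/-- Interim utility `u^K(v, p)` of a bidder with value `v` in a second price
auction with reserve price `p` among `K` i.i.d. bidders from `μ`. -/
noncomputable def uK (μ : Measure ℝ) (K : ℕ) (v p : ℝ) : ℝ :=
  ∫ x : Fin (K - 1) → ℝ, max (v - (List.ofFn x).foldr max p) 0 ∂(Measure.pi fun _ => μ)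

/-- A distribution on `[0, ∞)` has monotone hazard rate (MHR) if it has a density `f`
whose hazard rate `f v / (1 - F v)` is non-decreasing on its support. -/
def IsMHR (μ : Measure ℝ) : Prop :=
  ∃ f : ℝ → ℝ, (∀ x, 0 ≤ f x) ∧ (∀ x, x < 0 → f x = 0) ∧
    μ = MeasureTheory.volume.withDensity (fun x => ENNReal.ofReal (f x)) ∧
    MonotoneOn (fun v => f v / (1 - ProbabilityTheory.cdf μ v)) (Function.support f)

/-- `α`-strong regularity: a density `f`, positive on an interval support contained
in `[0, ∞)`, whose virtual value `φ(x) = x - (1 - F x)/f x` satisfies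
`φ(y) - φ(x) ≥ α (y - x)` whenever `x < y` on the support. -/
def IsAlphaStronglyRegular (α : ℝ) (μ : Measure ℝ) : Prop :=
  ∃ f : ℝ → ℝ, (∀ x, 0 ≤ f x) ∧
    μ = MeasureTheory.volume.withDensity (fun x => ENNReal.ofReal (f x)) ∧
    Set.OrdConnected (Function.support f) ∧
    (∀ x ∈ Function.support f, 0 ≤ x) ∧
    (∀ x ∈ Function.support f, ∀ y ∈ Function.support f, x < y →
      α * (y - x) ≤
        (y - (1 - ProbabilityTheory.cdf μ y) / f y) -
          (x - (1 - ProbabilityTheory.cdf μ x) / f x))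

end

/-! Since `c N ≥ m`, the guarded maximisation only sees order statistics of index `i > m`. With
the `m` controlled samples on top, the `i`-th largest sample is the `(i - m)`-th largest entry
of `w`, so the price is `b = w_(K - m)` for the guarded argmax `K` of `i ↦ i · w_(i - m)`.
For arbitrary `v_I`, suppose the price `x = v_(I)` exceeded `b`, and let `s` controlled and `B`
other samples be `≥ x`, so that `I ≤ s + B < s + K - m`. Optimality of `K` against index
`B + m` gives `(B + m) x ≤ K b`; strict optimality of `I` (ties go to the larger index) against
index `K - m + s` gives `(K - m + s) b < (s + B) x`. Adding, `(m - s)(x - b) < 0`, which is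
absurd. Hence the price, and with it `δ_I`, is largest at `v̄_I`, and the supremum is attained
there. -/

open Finset

theorem sort_ofFn_eq_ofFn_comp_sort {α : Type*} [LinearOrder α] {N : ℕ} (v : Fin N → α) :
    Multiset.sort (↑(List.ofFn v)) (· ≤ ·) = List.ofFn (v ∘ Tuple.sort v) :=
  List.Perm.eq_of_pairwise' (Multiset.pairwise_sort _ _)
    (Tuple.monotone_sort v).sortedLE_ofFn.pairwise
    ((Multiset.coe_eq_coe.1 (Multiset.sort_eq _ _)).trans ((Tuple.sort v).ofFn_comp_perm v).symm)

theorem sortedVal_eq {N : ℕ} (v : Fin N → ℝ) {i : ℕ} (hi : 1 ≤ i) (hiN : i ≤ N) :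
    sortedVal v i = v (Fin.revPerm.trans (Tuple.sort v) ⟨i - 1, by omega⟩) := by
  rw [sortedVal, sort_ofFn_eq_ofFn_comp_sort, List.getD_eq_getElem _ _ (by simp; omega),
    List.getElem_ofFn]
  simp only [Function.comp_apply, Equiv.trans_apply, Fin.revPerm_apply]
  congr 2
  ext
  simp only [Fin.val_rev]
  omega

theorem card_filter_comp_perm {N : ℕ} (σ : Equiv.Perm (Fin N)) (p : Fin N → Prop)
    [DecidablePred p] : #{j | p (σ j)} = #{j | p j} := by
  simp only [card_filter]
  exact Equiv.sum_comp σ (fun j => if p j then 1 else 0)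

theorem le_sortedVal_iff {N : ℕ} (v : Fin N → ℝ) {i : ℕ} (hi : 1 ≤ i) (hiN : i ≤ N) (x : ℝ) :
    x ≤ sortedVal v i ↔ i ≤ #{j | x ≤ v j} := by
  set σ := Fin.revPerm.trans (Tuple.sort v)
  have hanti : Antitone (v ∘ σ) := (Tuple.monotone_sort v).comp_antitone Fin.rev_anti
  have := Tuple.lt_card_ge_iff_apply_ge_of_antitone hanti (j := ⟨i - 1, by omega⟩) (a := x)
  rw [sortedVal_eq v hi hiN, ← card_filter_comp_perm σ (x ≤ v ·)]
  simp only [Function.comp_apply] at this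
  rw [← this]
  omega

theorem sortedVal_nonneg {N : ℕ} {v : Fin N → ℝ} (hv : ∀ j, 0 ≤ v j) (i : ℕ) :
    0 ≤ sortedVal v i := by
  rw [sortedVal, sort_ofFn_eq_ofFn_comp_sort]
  rcases lt_or_ge (N - i) N with h | h
  · rw [List.getD_eq_getElem _ _ (by simpa using h), List.getElem_ofFn]
    exact hv _
  · rw [List.getD_eq_default _ _ (by simpa using h)]

theorem sortedVal_zero {N : ℕ} (v : Fin N → ℝ) : sortedVal v 0 = 0 :=
  List.getD_eq_default _ _ (by simp)

section argmax

variable {S : Finset ℕ} {f : ℕ → ℝ} {j : ℕ}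

theorem argmaxIdx_empty (f : ℕ → ℝ) : argmaxIdx ∅ f = 0 := rfl

theorem argmaxIdx_congr {g : ℕ → ℝ} (h : ∀ i ∈ S, f i = g i) :
    argmaxIdx S f = argmaxIdx S g := by
  unfold argmaxIdx
  congr 2
  refine filter_congr fun i hi => ?_
  rw [h i hi]
  exact forall₂_congr fun j hj => by rw [h j hj]

theorem isGreatest_argmaxIdx (hS : S.Nonempty) :
    IsGreatest ↑(S.filter fun i => ∀ j ∈ S, f j ≤ f i) (argmaxIdx S f) := by
  obtain ⟨a, ha, hmax⟩ := S.exists_max_image f hS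
  have hT : (S.filter fun i => ∀ j ∈ S, f j ≤ f i).Nonempty := ⟨a, mem_filter.2 ⟨ha, hmax⟩⟩
  rw [argmaxIdx, ← coe_max' hT, WithBot.unbotD_coe]
  exact isGreatest_max' _ hT

theorem argmaxIdx_mem (hS : S.Nonempty) : argmaxIdx S f ∈ S :=
  (mem_filter.1 (isGreatest_argmaxIdx hS).1).1

theorem apply_le_apply_argmaxIdx (hj : j ∈ S) : f j ≤ f (argmaxIdx S f) :=
  (mem_filter.1 (isGreatest_argmaxIdx ⟨j, hj⟩).1).2 j hj

theorem apply_lt_apply_argmaxIdx (hj : j ∈ S) (hlt : argmaxIdx S f < j) :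
    f j < f (argmaxIdx S f) := by
  by_contra! h
  have := (isGreatest_argmaxIdx ⟨j, hj⟩).2
    (mem_filter.2 ⟨hj, fun k hk => (apply_le_apply_argmaxIdx hk).trans h⟩)
  exact hlt.not_ge this

end argmax

theorem card_filter_append {m n : ℕ} (a : Fin m → ℝ) (b : Fin n → ℝ) (p : ℝ → Prop)
    [DecidablePred p] :
    #{j | p (Fin.append a b j)} = #{i | p (a i)} + #{j | p (b j)} := by
  simp only [card_filter, Fin.sum_univ_add, Fin.append_left, Fin.append_right]

theorem append_nonneg {m n : ℕ} {a : Fin m → ℝ} {b : Fin n → ℝ} (ha : ∀ i, 0 ≤ a i)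
    (hb : ∀ j, 0 ≤ b j) (j : Fin (m + n)) : 0 ≤ Fin.append a b j :=
  Fin.addCases (fun i => by simpa using ha i) (fun i => by simpa using hb i) j

theorem sortedVal_append_of_le {m n : ℕ} {vbar : Fin m → ℝ} {w : Fin n → ℝ}
    (hvbar : ∀ i j, w j ≤ vbar i) {i : ℕ} (hmi : m < i) (hiN : i ≤ m + n) :
    sortedVal (Fin.append vbar w) i = sortedVal w (i - m) := by
  refine eq_of_forall_le_iff fun x => ?_
  rw [le_sortedVal_iff _ (by omega) hiN, le_sortedVal_iff w (by omega) (by omega),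
    card_filter_append]
  have hm : #{k | x ≤ vbar k} ≤ m := (card_filter_le _ _).trans_eq (card_fin m)
  rcases Nat.eq_zero_or_pos #{j | x ≤ w j} with h0 | hpos
  · omega
  · obtain ⟨j, hj⟩ := card_pos.1 hpos
    rw [filter_true_of_mem fun k _ => (mem_filter.1 hj).2.trans (hvbar k j), card_fin]
    omega

noncomputable def guardedRange (c : ℝ) (N : ℕ) : Finset ℕ :=
  (Icc 1 N).filter fun i => c * N < (i : ℝ)

section guardedRange

variable {c : ℝ} {m N i j : ℕ}

theorem ERMIdx_eq_argmaxIdx (v : Fin N → ℝ) :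
    ERMIdx c v = argmaxIdx (guardedRange c N) fun i => (i : ℝ) * sortedVal v i := rfl

theorem ERM_eq_zero_of_guardedRange_eq_empty (hG : guardedRange c N = ∅) (v : Fin N → ℝ) :
    ERM c v = 0 := by
  rw [ERM, ERMIdx_eq_argmaxIdx, hG, argmaxIdx_empty, sortedVal_zero]

theorem lt_and_le_of_mem_guardedRange (hmc : (m : ℝ) ≤ c * N) (hi : i ∈ guardedRange c N) :
    m < i ∧ i ≤ N := by
  simp only [guardedRange, mem_filter, mem_Icc] at hi
  exact ⟨by exact_mod_cast hmc.trans_lt hi.2, hi.1.2⟩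

theorem mem_guardedRange_of_le (hi : i ∈ guardedRange c N) (hij : i ≤ j) (hjN : j ≤ N) :
    j ∈ guardedRange c N := by
  simp only [guardedRange, mem_filter, mem_Icc] at hi ⊢
  exact ⟨⟨hi.1.1.trans hij, hjN⟩, hi.2.trans_le (by exact_mod_cast hij)⟩

theorem kStarInf_eq_argmaxIdx {n : ℕ} (hmc : (m : ℝ) ≤ c * N) (w : Fin n → ℝ) :
    kStarInf c N m w = argmaxIdx (guardedRange c N) fun i => (i : ℝ) * sortedVal w (i - m) := by
  rw [kStarInf]
  congr 1
  ext i
  simp only [guardedRange, mem_filter, mem_Icc]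
  constructor
  · rintro ⟨⟨hmi, hiN⟩, hci⟩
    exact ⟨⟨by omega, hiN⟩, hci⟩
  · rintro ⟨⟨hi, hiN⟩, hci⟩
    exact ⟨⟨by exact_mod_cast hmc.trans_lt hci, hiN⟩, hci⟩

end guardedRange

section append

variable {c : ℝ} {m n : ℕ} {w : Fin n → ℝ}

theorem ERM_append_of_le {vbar : Fin m → ℝ} (hmc : (m : ℝ) ≤ c * ↑(m + n))
    (hvbar : ∀ i j, w j ≤ vbar i) (hG : (guardedRange c (m + n)).Nonempty) :
    ERM c (Fin.append vbar w) = sortedVal w (kStarInf c (m + n) m w - m) := by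
  have hval : ∀ i ∈ guardedRange c (m + n),
      sortedVal (Fin.append vbar w) i = sortedVal w (i - m) := fun i hi =>
    sortedVal_append_of_le hvbar (lt_and_le_of_mem_guardedRange hmc hi).1
      (lt_and_le_of_mem_guardedRange hmc hi).2
  rw [ERM, ERMIdx_eq_argmaxIdx, argmaxIdx_congr fun i hi => by rw [hval i hi],
    kStarInf_eq_argmaxIdx hmc, hval _ (argmaxIdx_mem hG)]

theorem ERM_append_le_sortedVal_kStarInf {vI : Fin m → ℝ} (hmc : (m : ℝ) ≤ c * ↑(m + n))
    (hG : (guardedRange c (m + n)).Nonempty) (hvI : ∀ i, 0 ≤ vI i) (hw : ∀ j, 0 ≤ w j) :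
    ERM c (Fin.append vI w) ≤ sortedVal w (kStarInf c (m + n) m w - m) := by
  rw [ERM, ERMIdx_eq_argmaxIdx, kStarInf_eq_argmaxIdx hmc]
  set G := guardedRange c (m + n)
  set v := Fin.append vI w
  set I := argmaxIdx G fun i => (i : ℝ) * sortedVal v i
  set K := argmaxIdx G fun i => (i : ℝ) * sortedVal w (i - m)
  have hI : I ∈ G := argmaxIdx_mem hG
  have hK : K ∈ G := argmaxIdx_mem hG
  obtain ⟨hmI, hIN⟩ := lt_and_le_of_mem_guardedRange hmc hI
  obtain ⟨hmK, hKN⟩ := lt_and_le_of_mem_guardedRange hmc hK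
  set x := sortedVal v I
  set b := sortedVal w (K - m)
  have hx : 0 ≤ x := sortedVal_nonneg (append_nonneg hvI hw) I
  by_contra! hbx
  set s := #{i | x ≤ vI i}
  set B := #{j | x ≤ w j}
  have hs : s ≤ m := (card_filter_le _ _).trans_eq (card_fin m)
  have hIsB : I ≤ s + B := by
    rw [← card_filter_append]
    exact (le_sortedVal_iff v (by omega) hIN x).1 le_rfl
  have hBK : B < K - m := by
    by_contra! h
    exact hbx.not_ge ((le_sortedVal_iff w (by omega) (by omega) x).2 h)
  have hBm : B + m ∈ G := mem_guardedRange_of_le hI (by omega) (by omega)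
  have hxB : x ≤ sortedVal w B := (le_sortedVal_iff w (by omega) (by omega) x).2 le_rfl
  have hK_opt : ((B + m : ℕ) : ℝ) * sortedVal w (B + m - m) ≤ K * b :=
    apply_le_apply_argmaxIdx (f := fun i => (i : ℝ) * sortedVal w (i - m)) hBm
  have hK' : K - m + s ∈ G := mem_guardedRange_of_le hI (by omega) (by omega)
  have hbK' : b ≤ sortedVal v (K - m + s) := by
    rw [le_sortedVal_iff v (by omega) (by omega), card_filter_append]
    have h1 : s ≤ #{i | b ≤ vI i} :=
      card_le_card (monotone_filter_right _ fun _ _ h => hbx.le.trans h)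
    have h2 : K - m ≤ #{j | b ≤ w j} := (le_sortedVal_iff w (by omega) (by omega) b).1 le_rfl
    omega
  have hI_opt : ((K - m + s : ℕ) : ℝ) * sortedVal v (K - m + s) < I * x :=
    apply_lt_apply_argmaxIdx (f := fun i => (i : ℝ) * sortedVal v i) hK' (by omega)
  rw [Nat.add_sub_cancel] at hK_opt
  push_cast [Nat.cast_sub hmK.le] at hK_opt hI_opt
  have hIsB' : (I : ℝ) ≤ s + B := by exact_mod_cast hIsB
  have hs' : (s : ℝ) ≤ m := by exact_mod_cast hs
  have hmK' : (m : ℝ) ≤ K := by exact_mod_cast hmK.le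
  linarith [mul_le_mul_of_nonneg_left hxB (by positivity : (0 : ℝ) ≤ B + m),
    mul_le_mul_of_nonneg_left hbK' (by linarith : (0 : ℝ) ≤ K - m + s),
    mul_le_mul_of_nonneg_right hIsB' hx,
    mul_le_mul_of_nonneg_left hbx.le (by linarith : (0 : ℝ) ≤ m - s)]

theorem ERM_append_le_ERM_append_of_le {vI vbar : Fin m → ℝ} (hmc : (m : ℝ) ≤ c * ↑(m + n))
    (hvI : ∀ i, 0 ≤ vI i) (hw : ∀ j, 0 ≤ w j) (hvbar : ∀ i j, w j ≤ vbar i) :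
    ERM c (Fin.append vI w) ≤ ERM c (Fin.append vbar w) := by
  rcases (guardedRange c (m + n)).eq_empty_or_nonempty with hG | hG
  · simp only [ERM_eq_zero_of_guardedRange_eq_empty hG, le_refl]
  · rw [ERM_append_of_le hmc hvbar hG]
    exact ERM_append_le_sortedVal_kStarInf hmc hG hvI hw

theorem deltaIA_le_deltaIA_of_ERM_le {b b' : Fin m → ℝ} (hw : ∀ j, 0 ≤ w j)
    (hb : ∀ i, 0 ≤ b i)
    (h : ERM c (Fin.append b w) ≤ ERM c (Fin.append b' w)) :
    deltaIA c b w ≤ deltaIA c b' w := by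
  set A := {p : ℝ | ∃ b : Fin m → ℝ, (∀ i, 0 ≤ b i) ∧ p = ERM c (Fin.append b w)}
  have hA : ∀ p ∈ A, 0 ≤ p := by
    rintro _ ⟨b, hb, rfl⟩
    exact sortedVal_nonneg (append_nonneg hb hw) _
  have hA0 : 0 ≤ sInf A := Real.sInf_nonneg hA
  refine sub_le_sub_left ?_ 1
  rcases hA0.eq_or_lt with h0 | hpos
  · rw [← h0, zero_div, zero_div]
  · exact div_le_div_of_nonneg_left hA0 (hpos.trans_le (csInf_le ⟨0, hA⟩ ⟨b, hb, rfl⟩)) h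

end append

/-- Claim 2 in the paper. Let `P = ERM^c` with `c ≥ m/N`
(`N = m + n` total samples, `0 ≤ c < 1`). For any nonnegative `w = v_{-I}` and any
`vbar` consisting of `m` values all at least `max w`, the worst-case
incentive-awareness measure equals `δ_I(vbar, w)`:
`δ_m^worst(w) = δ_I(vbar, w)` (independently of the choice of such `vbar`). -/
theorem deltaWorst_attained_at_top (m n : ℕ) (c : ℝ)
    (hc : (m : ℝ) / (m + n) ≤ c) (hc1 : c < 1)
    (w : Fin n → ℝ) (hw : ∀ j, 0 ≤ w j)
    (vbar : Fin m → ℝ) (hvbar : ∀ i j, w j ≤ vbar i) :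
    deltaWorstA c m w = deltaIA c vbar w := by
  have hmc : (m : ℝ) ≤ c * ↑(m + n) := by
    rcases Nat.eq_zero_or_pos (m + n) with h | h
    · simp [show m = 0 by omega, show n = 0 by omega]
    · rw [div_le_iff₀ (by exact_mod_cast h)] at hc
      exact_mod_cast hc
  have hvbar0 : ∀ i, 0 ≤ vbar i := fun i => by
    have hn : 0 < n := by
      by_contra! hn
      obtain rfl : n = 0 := by omega
      rw [Nat.cast_zero, add_zero, div_self (by exact_mod_cast i.pos.ne')] at hc
      linarith
    exact (hw ⟨0, hn⟩).trans (hvbar i ⟨0, hn⟩)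
  refine IsGreatest.csSup_eq ⟨⟨vbar, hvbar0, rfl⟩, ?_⟩
  rintro _ ⟨vI, hvI, rfl⟩
  exact deltaIA_le_deltaIA_of_ERM_le hw hvI (ERM_append_le_ERM_append_of_le hmc hvI hw hvbar)
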